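/- arXiv:1511.02598 — 2 statements merged into one kernel-verified Lean document; each statement's English description precedes it below -/
import Mathlib

section
/- Over ℂ, for each of the three pairs (t,u) = (i√3, −i√3), ((−3+√3+i√(12−6√3))/2, (−3+√3−i√(12−6√3))/2), and ((−3−√3+i√(12+6√3))/2, (−3−√3−i√(12+6√3))/2), one has t ≠ u and the equality of points (1 : (1+t)³ : t⁴) = (1 : (1+u)³ : u⁴) in P²(ℂ). Consequently the quartic curve parametrized by (s:t) ↦ (s⁴ : s(s+t)³ : t⁴) has at least three distinct double points. -/
noncomputable section

/-- The image triple of the parameter `t` under `(s:t) ↦ (s⁴ : s(s+t)³ : t⁴)`, in the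
affine chart `s = 1`. -/
def quarticPt (t : ℂ) : Fin 3 → ℂ := ![1, (1 + t) ^ 3, t ^ 4]

def pair₁ : ℂ × ℂ :=
  (Complex.I * (Real.sqrt 3 : ℂ), -(Complex.I * (Real.sqrt 3 : ℂ)))

def pair₂ : ℂ × ℂ :=
  ((-3 + (Real.sqrt 3 : ℂ) + Complex.I * (Real.sqrt (12 - 6 * Real.sqrt 3) : ℂ)) / 2,
   (-3 + (Real.sqrt 3 : ℂ) - Complex.I * (Real.sqrt (12 - 6 * Real.sqrt 3) : ℂ)) / 2)

def pair₃ : ℂ × ℂ :=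
  ((-3 - (Real.sqrt 3 : ℂ) + Complex.I * (Real.sqrt (12 + 6 * Real.sqrt 3) : ℂ)) / 2,
   (-3 - (Real.sqrt 3 : ℂ) - Complex.I * (Real.sqrt (12 + 6 * Real.sqrt 3) : ℂ)) / 2)

/-! ### Auxiliary lemmas -/

def s3 : ℂ := (Real.sqrt 3 : ℝ)

lemma hs3 : s3 ^ 2 = 3 := by
  unfold s3
  rw [← Complex.ofReal_pow, Real.sq_sqrt (by norm_num : (0:ℝ) ≤ 3)]
  norm_num

lemma s3_ne : s3 ≠ 0 := by
  intro h
  have h2 := hs3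
  rw [h] at h2
  norm_num at h2

lemma sqrt_le3 : Real.sqrt 3 ≤ 3 := by
  nlinarith [Real.sq_sqrt (show (0:ℝ) ≤ 3 by norm_num), Real.sqrt_nonneg 3]

lemma sqrt2_eq : Real.sqrt (12 - 6 * Real.sqrt 3) = 3 - Real.sqrt 3 := by
  rw [show (12 - 6 * Real.sqrt 3) = (3 - Real.sqrt 3)^2 by
    nlinarith [Real.sq_sqrt (show (0:ℝ) ≤ 3 by norm_num)]]
  exact Real.sqrt_sq (by linarith [sqrt_le3])

lemma sqrt3_eq : Real.sqrt (12 + 6 * Real.sqrt 3) = 3 + Real.sqrt 3 := by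
  rw [show (12 + 6 * Real.sqrt 3) = (3 + Real.sqrt 3)^2 by
    nlinarith [Real.sq_sqrt (show (0:ℝ) ≤ 3 by norm_num)]]
  exact Real.sqrt_sq (by positivity)

lemma pair1_eq : pair₁ = (Complex.I * s3, -(Complex.I * s3)) := rfl

lemma pair2_eq : pair₂ =
    ((-3 + s3) * (1 - Complex.I) / 2, (-3 + s3) * (1 + Complex.I) / 2) := by
  unfold pair₂
  rw [sqrt2_eq]
  unfold s3
  push_cast
  simp only [Prod.mk.injEq]
  constructor <;> ring

lemma pair3_eq : pair₃ =
    ((-3 - s3) * (1 - Complex.I) / 2, (-3 - s3) * (1 + Complex.I) / 2) := by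
  unfold pair₃
  rw [sqrt3_eq]
  unfold s3
  push_cast
  simp only [Prod.mk.injEq]
  constructor <;> ring

lemma pair1_cube : (1 + Complex.I * s3) ^ 3 = (1 + -(Complex.I * s3)) ^ 3 := by
  linear_combination (2 * Complex.I^3 * s3) * hs3 + (6 * Complex.I * s3) * Complex.I_sq

lemma key_ne (a : ℂ) (ha : a ^ 2 + 6 * a + 6 = 0) :
    a * (1 - Complex.I) / 2 ≠ a * (1 + Complex.I) / 2 := by
  have ha0 : a ≠ 0 := by intro h; rw [h] at ha; norm_num at ha
  intro h
  have h2 : a * Complex.I = 0 := by linear_combination -h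
  rcases mul_eq_zero.mp h2 with h3 | h3
  · exact ha0 h3
  · exact Complex.I_ne_zero h3

lemma key_cube (a : ℂ) (ha : a ^ 2 + 6 * a + 6 = 0) :
    (1 + a * (1 - Complex.I) / 2) ^ 3 = (1 + a * (1 + Complex.I) / 2) ^ 3 := by
  linear_combination (-(a^3 * Complex.I) / 4) * Complex.I_sq + (-(a * Complex.I) / 2) * ha

lemma key_pow4 (a : ℂ) :
    (a * (1 - Complex.I) / 2) ^ 4 = (a * (1 + Complex.I) / 2) ^ 4 := by
  linear_combination (-(a^4 * Complex.I) / 2) * Complex.I_sq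

lemma key_val (a : ℂ) (ha : a ^ 2 + 6 * a + 6 = 0) :
    (a * (1 - Complex.I) / 2) ^ 4 = 36 * a + 45 := by
  linear_combination (5*a^4/16 - a^4*Complex.I/4 + a^4*Complex.I^2/16) * Complex.I_sq
    + (-15/2 + 3*a/2 - a^2/4) * ha

lemma ha2 : (-3 + s3) ^ 2 + 6 * (-3 + s3) + 6 = 0 := by linear_combination hs3

lemma ha3 : (-3 - s3) ^ 2 + 6 * (-3 - s3) + 6 = 0 := by linear_combination hs3

lemma pt1_4 : pair₁.1 ^ 4 = 9 := by
  rw [pair1_eq]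
  linear_combination (s3^4 * (Complex.I^2 - 1)) * Complex.I_sq + (s3^2 + 3) * hs3

lemma pt2_4 : pair₂.1 ^ 4 = 36 * (-3 + s3) + 45 := by
  rw [pair2_eq]; exact key_val _ ha2

lemma pt3_4 : pair₃.1 ^ 4 = 36 * (-3 - s3) + 45 := by
  rw [pair3_eq]; exact key_val _ ha3

lemma not_exists_c {t u : ℂ} (h : t ^ 4 ≠ u ^ 4) :
    ¬ ∃ c : ℂ, quarticPt t = c • quarticPt u := by
  rintro ⟨c, hc⟩
  have h0 := congrFun hc 0
  have h2 := congrFun hc 2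
  simp [quarticPt] at h0 h2
  apply h
  rw [h2, ← h0, one_mul]

lemma v12 : (9 : ℂ) ≠ 36 * (-3 + s3) + 45 := by
  intro h
  have hs : s3 = 2 := by linear_combination (-1/36 : ℂ) * h
  have h2 := hs3
  rw [hs] at h2
  norm_num at h2

lemma v13 : (9 : ℂ) ≠ 36 * (-3 - s3) + 45 := by
  intro h
  have hs : s3 = -2 := by linear_combination (1/36 : ℂ) * h
  have h2 := hs3
  rw [hs] at h2
  norm_num at h2

lemma v23 : (36 * (-3 + s3) + 45 : ℂ) ≠ 36 * (-3 - s3) + 45 := by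
  intro h
  exact s3_ne (by linear_combination (1/72 : ℂ) * h)

/-- For each of the three pairs `(t,u)`, one has `t ≠ u` while
`(1 : (1+t)³ : t⁴) = (1 : (1+u)³ : u⁴)` in `ℙ²(ℂ)`; moreover the three image points are
pairwise distinct in `ℙ²(ℂ)`, so the quartic `(s:t) ↦ (s⁴ : s(s+t)³ : t⁴)` has at least
three distinct double points. -/
theorem stmt_6 :
    (∀ p ∈ [pair₁, pair₂, pair₃],
      p.1 ≠ p.2 ∧ ∃ c : ℂ, c ≠ 0 ∧ quarticPt p.1 = c • quarticPt p.2) ∧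
    (∀ p ∈ [pair₁, pair₂, pair₃], ∀ q ∈ [pair₁, pair₂, pair₃], p ≠ q →
      ¬ ∃ c : ℂ, quarticPt p.1 = c • quarticPt q.1) := by
  constructor
  · intro p hp
    simp only [List.mem_cons, List.not_mem_nil, or_false] at hp
    rcases hp with rfl | rfl | rfl
    · rw [pair1_eq]
      refine ⟨?_, 1, one_ne_zero, ?_⟩
      · intro h
        have h3 : Complex.I * s3 = 0 := by linear_combination h / 2
        exact mul_ne_zero Complex.I_ne_zero s3_ne h3
      · rw [one_smul]
        show (![1, (1 + Complex.I * s3) ^ 3, (Complex.I * s3) ^ 4] : Fin 3 → ℂ) = _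
        rw [pair1_cube, show (Complex.I * s3) ^ 4 = (-(Complex.I * s3)) ^ 4 by ring]
        rfl
    · rw [pair2_eq]
      refine ⟨key_ne _ ha2, 1, one_ne_zero, ?_⟩
      rw [one_smul]
      show (![1, (1 + (-3 + s3) * (1 - Complex.I) / 2) ^ 3,
        ((-3 + s3) * (1 - Complex.I) / 2) ^ 4] : Fin 3 → ℂ) = _
      rw [key_cube _ ha2, key_pow4]
      rfl
    · rw [pair3_eq]
      refine ⟨key_ne _ ha3, 1, one_ne_zero, ?_⟩
      rw [one_smul]
      show (![1, (1 + (-3 - s3) * (1 - Complex.I) / 2) ^ 3,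
        ((-3 - s3) * (1 - Complex.I) / 2) ^ 4] : Fin 3 → ℂ) = _
      rw [key_cube _ ha3, key_pow4]
      rfl
  · intro p hp q hq hpq
    simp only [List.mem_cons, List.not_mem_nil, or_false] at hp hq
    rcases hp with rfl | rfl | rfl <;> rcases hq with rfl | rfl | rfl
    · exact absurd rfl hpq
    · exact not_exists_c (by rw [pt1_4, pt2_4]; exact v12)
    · exact not_exists_c (by rw [pt1_4, pt3_4]; exact v13)
    · exact not_exists_c (by rw [pt2_4, pt1_4]; exact v12.symm)
    · exact absurd rfl hpq
    · exact not_exists_c (by rw [pt2_4, pt3_4]; exact v23)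
    · exact not_exists_c (by rw [pt3_4, pt1_4]; exact v13.symm)
    · exact not_exists_c (by rw [pt3_4, pt2_4]; exact v23.symm)
    · exact absurd rfl hpq

end
end

section
/- Let K be a field of characteristic 2 and let α, β ∈ K satisfy α = β² + β + 1. With g(t) = t(t+β)³ + t(t+1)³ ∈ K[t], the identity (t+α)³ + α·g(t) = (βt+α)³ holds in K[t]. -/
open Polynomial

/-- In characteristic 2, with `α = β² + β + 1` and `g(t) = t(t+β)³ + t(t+1)³`,
the identity `(t+α)³ + α·g(t) = (βt+α)³` holds in `K[t]`. -/
theorem stmt_11 (K : Type*) [Field K] [CharP K 2] (β α : K) (hα : α = β ^ 2 + β + 1) :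
    (X + C α) ^ 3 + C α * (X * (X + C β) ^ 3 + X * (X + 1) ^ 3)
      = (C β * X + C α) ^ 3 := by
  have h2 : (2 : K[X]) = 0 := by exact_mod_cast CharP.cast_eq_zero K[X] 2
  subst hα
  simp only [map_add, map_pow, map_one]
  linear_combination (2*X + 2*X*C β + 2*X*C β^2 - X*C β^3 - X*C β^4 - X*C β^5
    + 3*X^2 + 3*X^2*C β + 3*X^2*C β^2 + 2*X^3 + 3*X^3*C β + 3*X^3*C β^2
    + X^3*C β^3 + X^4 + X^4*C β + X^4*C β^2) * h2
end
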